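/- arXiv:2006.08972 — 4 statements merged into one kernel-verified Lean document; each statement's English description precedes it below -/
import Mathlib

section
/- Let V ⊆ V' be an immediate extension of valuation rings with fraction fields K ⊆ K', and suppose x ∈ V' is transcendental over K and is a pseudo-limit of a transcendental pseudo-convergent sequence v in V without pseudo-limit in V. If V' is a filtered union of localizations of polynomial V-subalgebras in one variable, then for every polynomial f ∈ V[X] with f(x) ≠ 0 there exists y ∈ V with v(f(y)) = v(f(x)). -/
open Polynomial

variable {K' : Type*} [Field K'] {Γ₀ : Type*} [LinearOrderedCommGroupWithZero Γ₀]

/-- `C` is (inside the valuation ring of `v`) a localization `V[u']_{P(u')}` of a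
polynomial `V`-subalgebra in one variable: `u'` is an integer transcendental over `V`,
`P` has coefficients in `V`, `P(u')` is a unit of the valuation ring, and `C` consists of
the elements `g(u')/P(u')^n` with `g` over `V`. -/
def IsLocPolynomialSub (v : Valuation K' Γ₀) (V C : Subring K') : Prop :=
  ∃ u' : K', v u' ≤ 1 ∧
    (∀ q : Polynomial K', (∀ n, q.coeff n ∈ V) → q ≠ 0 → q.eval u' ≠ 0) ∧
    ∃ P : Polynomial K', (∀ n, P.coeff n ∈ V) ∧ v (P.eval u') = 1 ∧
      ∀ z : K', z ∈ C ↔ ∃ (g : Polynomial K') (n : ℕ),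
        (∀ m, g.coeff m ∈ V) ∧ z * (P.eval u') ^ n = g.eval u'

/-! Kaplansky's argument. Expand `f` in Taylor series at `a i`. For large `i` the values
`v (f⁽ᵏ⁾(a i))` of the Hasse derivatives are constant, say `c k`, while `γ i = v (x - a i)`
strictly decreases; a coincidence `c k * γ i ^ k = c l * γ i ^ l ≠ 0` with `k ≠ l` determines
`γ i`, so it happens for at most one `i`. Beyond all these indices the nonzero Taylor terms
have pairwise distinct values, so `v (f z)` is the value of the dominant term for every `z`
with `v (z - a i) = γ i`; both `x` and every later `a j` are such `z`. -/

open Filter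

theorem Polynomial.eval_eq_sum_range_hasseDeriv {R : Type*} [CommRing R] (f : R[X]) (r s : R) :
    f.eval s = ∑ k ∈ Finset.range (f.natDegree + 1), (hasseDeriv k f).eval r * (s - r) ^ k := by
  rw [← taylor_eval_sub r f s,
    eval_eq_sum_range' (n := f.natDegree + 1) (by rw [natDegree_taylor]; omega)]
  simp only [taylor_coeff]

theorem Polynomial.coeff_hasseDeriv_mem {R : Type*} [CommRing R] {V : Subring R} {f : R[X]}
    (hf : ∀ n, f.coeff n ∈ V) (k n : ℕ) : (hasseDeriv k f).coeff n ∈ V := by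
  rw [hasseDeriv_coeff]
  exact V.mul_mem (natCast_mem V _) (hf _)

theorem Valuation.map_sum_eq_map_sum_of_injOn (v : Valuation K' Γ₀) {ι : Type*} {s : Finset ι}
    {g h : ι → K'} (hgh : ∀ k ∈ s, v (g k) = v (h k))
    (hinj : ∀ k ∈ s, ∀ l ∈ s, v (g k) = v (g l) → v (g k) ≠ 0 → k = l) :
    v (∑ k ∈ s, g k) = v (∑ k ∈ s, h k) := by
  classical
  rcases s.eq_empty_or_nonempty with rfl | hs
  · simp
  obtain ⟨k₀, hk₀, hmax⟩ := s.exists_max_image (fun k => v (g k)) hs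
  by_cases h0 : v (g k₀) = 0
  · have hg : ∀ k ∈ s, v (g k) ≤ 0 := fun k hk => h0 ▸ hmax k hk
    have hh : ∀ k ∈ s, v (h k) ≤ 0 := fun k hk => hgh k hk ▸ hg k hk
    rw [le_antisymm (v.map_sum_le hg) zero_le, le_antisymm (v.map_sum_le hh) zero_le]
  have hlt : ∀ k ∈ s \ {k₀}, v (g k) < v (g k₀) := by
    intro k hk
    obtain ⟨hks, hne⟩ := Finset.mem_sdiff.1 hk
    refine (hmax k hks).lt_of_ne fun heq => hne (Finset.mem_singleton.2 ?_)
    exact hinj k hks k₀ hk₀ heq (heq ▸ h0)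
  rw [v.map_sum_eq_of_lt hk₀ hlt, v.map_sum_eq_of_lt hk₀ fun k hk => ?_, hgh k₀ hk₀]
  rw [← hgh k (Finset.mem_sdiff.1 hk).1, ← hgh k₀ hk₀]
  exact hlt k hk

theorem subsingleton_setOf_mul_pow_eq {ι : Type*} {γ : ι → Γ₀} (hγ : Function.Injective γ)
    {k l : ℕ} (hkl : k ≠ l) (c d : Γ₀) :
    {i | c * γ i ^ k = d * γ i ^ l ∧ c * γ i ^ k ≠ 0}.Subsingleton := by
  wlog hlt : k < l generalizing k l c d
  · intro i hi i' hi'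
    exact this hkl.symm d c (by omega) ⟨hi.1.symm, hi.1 ▸ hi.2⟩ ⟨hi'.1.symm, hi'.1 ▸ hi'.2⟩
  have key : ∀ i ∈ {i | c * γ i ^ k = d * γ i ^ l ∧ c * γ i ^ k ≠ 0},
      d ≠ 0 ∧ c = d * γ i ^ (l - k) := by
    rintro i ⟨heq, hne⟩
    refine ⟨fun hd => hne (by rw [heq, hd, zero_mul]), ?_⟩
    apply mul_right_cancel₀ (right_ne_zero_of_mul hne)
    rw [heq, mul_assoc, ← pow_add, Nat.sub_add_cancel hlt.le]
  intro i hi i' hi'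
  obtain ⟨hd, hci⟩ := key i hi
  apply hγ
  refine (pow_left_inj₀ zero_le zero_le (Nat.sub_ne_zero_of_lt hlt)).1 ?_
  exact mul_left_cancel₀ hd (hci.symm.trans (key i' hi').2)

section PseudoConvergent

variable (v : Valuation K' Γ₀) {ι : Type*} [LinearOrder ι]

def IsPseudoConvergent (a : ι → K') : Prop :=
  ∀ i j k, i < j → j < k → v (a j - a k) < v (a i - a k)

def IsPseudoLimit (a : ι → K') (x : K') : Prop :=
  ∀ i j, i < j → v (x - a i) = v (a i - a j)

variable {v} {a : ι → K'} {x : K'}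

theorem IsPseudoConvergent.isPseudoLimit_of_isMax (hpc : IsPseudoConvergent v a) {m : ι}
    (hm : IsMax m) : IsPseudoLimit v a (a m) := by
  intro i j hij
  rcases (not_lt.1 (hm.not_lt (b := j))).lt_or_eq with hjm | rfl
  · rw [v.map_sub_swap, show a i - a j = (a i - a m) - (a j - a m) by ring,
      v.map_sub_eq_of_lt_left (hpc i j m hij hjm)]
  · exact v.map_sub_swap _ _

theorem IsPseudoLimit.map_sub_eq (hlim : IsPseudoLimit v a x) {i j : ι} (hij : i < j) :
    v (a j - a i) = v (x - a i) := by
  rw [v.map_sub_swap, hlim i j hij]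

theorem IsPseudoLimit.strictAnti_map_sub [NoMaxOrder ι] (hpc : IsPseudoConvergent v a)
    (hlim : IsPseudoLimit v a x) : StrictAnti fun i => v (x - a i) := by
  intro i j hij
  obtain ⟨k, hjk⟩ := exists_gt j
  dsimp only
  rw [hlim j k hjk, hlim i k (hij.trans hjk)]
  exact hpc i j k hij hjk

theorem IsPseudoLimit.eventually_map_eval_eq [Nonempty ι] [NoMaxOrder ι]
    (hpc : IsPseudoConvergent v a) (hlim : IsPseudoLimit v a x) (f : K'[X])
    (hconst : ∀ k, ∃ c, ∀ᶠ i in atTop, v ((hasseDeriv k f).eval (a i)) = c) :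
    ∀ᶠ j in atTop, v (f.eval (a j)) = v (f.eval x) := by
  choose c hc using hconst
  set γ := fun i => v (x - a i)
  set s := Finset.range (f.natDegree + 1)
  have hgood : ∀ᶠ i in atTop, (∀ k ∈ s, v ((hasseDeriv k f).eval (a i)) = c k) ∧
      ∀ k ∈ s, ∀ l ∈ s, k ≠ l → c k * γ i ^ k = c l * γ i ^ l → c k * γ i ^ k = 0 := by
    refine ((eventually_all_finset s).2 fun k _ => hc k).and
      ((eventually_all_finset s).2 fun k _ => (eventually_all_finset s).2 fun l _ => ?_)
    rcases eq_or_ne k l with rfl | hkl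
    · exact Eventually.of_forall fun _ h => absurd rfl h
    have hfin := (subsingleton_setOf_mul_pow_eq (hlim.strictAnti_map_sub hpc).injective
      hkl (c k) (c l)).finite
    filter_upwards [atTop_le_cofinite hfin.compl_mem_cofinite] with i hi _ heq
    exact not_not.1 fun hne => hi ⟨heq, hne⟩
  obtain ⟨i, hi_const, hi_distinct⟩ := hgood.exists
  have hterm : ∀ z, v (z - a i) = γ i → ∀ k ∈ s,
      v ((hasseDeriv k f).eval (a i) * (z - a i) ^ k) = c k * γ i ^ k := by
    intro z hz k hk
    rw [map_mul, map_pow, hz, hi_const k hk]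
  filter_upwards [eventually_gt_atTop i] with j hij
  have hterm_j := hterm _ (hlim.map_sub_eq hij)
  rw [eval_eq_sum_range_hasseDeriv f (a i), eval_eq_sum_range_hasseDeriv f (a i) x]
  refine v.map_sum_eq_map_sum_of_injOn (fun k hk => ?_) fun k hk l hl heq hne => ?_
  · rw [hterm_j k hk, hterm x rfl k hk]
  · rw [hterm_j k hk, hterm_j l hl] at heq
    rw [hterm_j k hk] at hne
    exact not_not.1 fun hkl => hne (hi_distinct k hk l hl hkl heq)

end PseudoConvergent

theorem stmt_5_general (v : Valuation K' Γ₀) (V : Subring K') (x : K')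
    (ι : Type*) [LinearOrder ι] (a : ι → K') (ha : ∀ j, a j ∈ V)
    -- pseudo-convergent
    (hpc : ∀ i j k : ι, i < j → j < k → v (a j - a k) < v (a i - a k))
    -- transcendental pseudo-convergent sequence
    (htr : ∀ f : Polynomial K', (∀ n, f.coeff n ∈ V) →
      ∃ N : ι, ∀ i j : ι, N ≤ i → i < j → v (f.eval (a i)) = v (f.eval (a j)))
    -- x is a pseudo-limit of the sequence
    (hlim : ∀ i j : ι, i < j → v (x - a i) = v (a i - a j))
    -- the sequence has no pseudo-limit in V
    (hnolim : ¬ ∃ y ∈ V, ∀ i j : ι, i < j → v (y - a i) = v (a i - a j)) :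
    ∀ f : Polynomial K', (∀ n, f.coeff n ∈ V) → f.eval x ≠ 0 →
      ∃ y ∈ V, v (f.eval y) = v (f.eval x) := by
  intro f hf _
  have : Nonempty ι := by
    by_contra! hι
    exact hnolim ⟨0, V.zero_mem, fun i => (hι.false i).elim⟩
  have : NoMaxOrder ι := ⟨fun m => by
    by_contra! hm
    exact hnolim ⟨a m, ha m, IsPseudoConvergent.isPseudoLimit_of_isMax hpc fun j _ => hm j⟩⟩
  have hconst (k : ℕ) : ∃ c, ∀ᶠ i in atTop, v ((hasseDeriv k f).eval (a i)) = c := by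
    obtain ⟨N, hN⟩ := htr _ (coeff_hasseDeriv_mem hf k)
    refine ⟨v ((hasseDeriv k f).eval (a N)), ?_⟩
    filter_upwards [eventually_ge_atTop N] with i hi
    rcases hi.eq_or_lt with rfl | hlt
    · rfl
    · exact (hN N i le_rfl hlt).symm
  obtain ⟨j, hj⟩ := (IsPseudoLimit.eventually_map_eval_eq hpc hlim f hconst).exists
  exact ⟨a j, ha j, hj⟩

/-- Let `V ⊆ V'` be an immediate extension of valuation rings with fraction
fields `K ⊆ K'`, and suppose `x ∈ V'` is transcendental over `K` and is a pseudo-limit of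
a transcendental pseudo-convergent sequence in `V` without pseudo-limit in `V`.  If `V'`
is a filtered union of localizations of polynomial `V`-subalgebras in one variable, then
for every polynomial `f ∈ V[X]` with `f(x) ≠ 0` there exists `y ∈ V` with
`val(f(y)) = val(f(x))`.  (`V'` is the valuation ring `v.integer` of the multiplicative
valuation `v`; classical `val a > val b` corresponds to `v a < v b`.) -/
theorem stmt_5 (v : Valuation K' Γ₀) (V : Subring K') (hV : V ≤ v.integer)
    -- immediate extension: same value group and same residue field
    (hvalgrp : ∀ z : K', z ≠ 0 → ∃ a : K', a ∈ V ∧ a ≠ 0 ∧ v a = v z)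
    (hres : ∀ z ∈ v.integer, ∃ a ∈ V, v (z - a) < 1)
    (x : K') (hx : x ∈ v.integer)
    -- x is transcendental over K = Frac V
    (hxtr : ∀ q : Polynomial K', (∀ n, q.coeff n ∈ V) → q ≠ 0 → q.eval x ≠ 0)
    (ι : Type*) [LinearOrder ι] (a : ι → K') (ha : ∀ j, a j ∈ V)
    -- pseudo-convergent
    (hpc : ∀ i j k : ι, i < j → j < k → v (a j - a k) < v (a i - a k))
    -- transcendental pseudo-convergent sequence
    (htr : ∀ f : Polynomial K', (∀ n, f.coeff n ∈ V) →
      ∃ N : ι, ∀ i j : ι, N ≤ i → i < j → v (f.eval (a i)) = v (f.eval (a j)))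
    -- x is a pseudo-limit of the sequence
    (hlim : ∀ i j : ι, i < j → v (x - a i) = v (a i - a j))
    -- the sequence has no pseudo-limit in V
    (hnolim : ¬ ∃ y ∈ V, ∀ i j : ι, i < j → v (y - a i) = v (a i - a j))
    -- V' is a filtered union of localizations of polynomial V-subalgebras in one variable
    (hunion : ∀ s : Finset K', (↑s : Set K') ⊆ (v.integer : Set K') →
      ∃ C : Subring K', (↑s : Set K') ⊆ (C : Set K') ∧ C ≤ v.integer ∧
        IsLocPolynomialSub v V C) :
    ∀ f : Polynomial K', (∀ n, f.coeff n ∈ V) → f.eval x ≠ 0 →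
      ∃ y ∈ V, v (f.eval y) = v (f.eval x) :=
  stmt_5_general v V x ι a ha hpc htr hlim hnolim
end

section
/- Let C = V[u']_{P(u')} ⊆ V' be a localization of a polynomial V-subalgebra of a valuation ring extension V ⊆ V' with common maximal-ideal structure, where u' ∈ V' is transcendental over V and P(u') is a unit in V'. If u ∈ V satisfies u ≡ u' modulo the maximal ideal of V', then P(u) is a unit in V and the V-algebra map C → V sending u' to u is a retraction of the inclusion V ⊆ C. -/
/-!
As `u ≡ u'` modulo the maximal ideal of `V'` and `P` has integral coefficients,
`P(u) ≡ P(u')`, so `v (P u) = v (P u') = 1` and locality of `V ⊆ V'` makes `P(u)` a unit of `V`.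
Since `u'` is transcendental, evaluation `V[X] → K'` at `u'` is injective, which makes `C` the
localization of `V[X]` away from `P`. Evaluation `V[X] → V` at `u` inverts `P`, so it extends to
`C` by the universal property of the localization.
-/

open Polynomial

namespace Polynomial

variable {K : Type*} [CommRing K] {V : Subring K}

theorem exists_map_subtype_eq_iff {p : K[X]} :
    (∃ q : V[X], q.map V.subtype = p) ↔ ∀ n, p.coeff n ∈ V := by
  rw [← mem_lifts, lifts_iff_coeff_lifts]
  simp

theorem exists_coeff_mem_and_iff (Q : K[X] → Prop) :
    (∃ g : K[X], (∀ n, g.coeff n ∈ V) ∧ Q g) ↔ ∃ q : V[X], Q (q.map V.subtype) := by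
  constructor
  · rintro ⟨g, hg, hQ⟩
    obtain ⟨q, rfl⟩ := exists_map_subtype_eq_iff.2 hg
    exact ⟨q, hQ⟩
  · rintro ⟨q, hQ⟩
    exact ⟨q.map V.subtype, fun n ↦ by simp, hQ⟩

theorem injective_eval₂RingHom_subtype {x : K}
    (hx : ∀ p : K[X], (∀ n, p.coeff n ∈ V) → p ≠ 0 → p.eval x ≠ 0) :
    Function.Injective (eval₂RingHom V.subtype x) := by
  refine (injective_iff_map_eq_zero _).2 fun q hq ↦ ?_
  by_contra hq0
  exact hx (q.map V.subtype) (fun n ↦ by simp)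
    ((Polynomial.map_ne_zero_iff V.subtype_injective).2 hq0) (by rwa [eval_map])

end Polynomial

namespace Valuation

variable {K Γ₀ : Type*} [CommRing K] [LinearOrderedCommGroupWithZero Γ₀] (v : Valuation K Γ₀)
  {p : K[X]} {x y : K}

theorem map_eval_sub_eval_le (hp : ∀ n, v (p.coeff n) ≤ 1) (hx : v x ≤ 1) (hy : v y ≤ 1) :
    v (p.eval x - p.eval y) ≤ v (x - y) := by
  obtain ⟨q, rfl⟩ := (exists_map_subtype_eq_iff (V := v.integer)).2 hp
  obtain ⟨c, hc⟩ := sub_dvd_eval_sub (⟨x, hx⟩ : v.integer) ⟨y, hy⟩ q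
  have hc' : (q.map v.integer.subtype).eval x - (q.map v.integer.subtype).eval y
      = (x - y) * c := by
    have := congrArg v.integer.subtype hc
    rwa [_root_.map_sub, _root_.map_mul, ← eval_map_apply, ← eval_map_apply] at this
  rw [hc', v.map_mul]
  exact mul_le_of_le_one_right' c.2

theorem map_eval_eq_of_sub_lt (hp : ∀ n, v (p.coeff n) ≤ 1) (hx : v x ≤ 1) (hy : v y ≤ 1)
    (hxy : v (x - y) < v (p.eval y)) : v (p.eval x) = v (p.eval y) :=
  v.map_eq_of_sub_lt ((v.map_eval_sub_eval_le hp hx hy).trans_lt hxy)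

end Valuation

theorem Subring.exists_lift_away_of_mem_iff {A K B : Type*} [CommRing A] [CommRing K]
    [CommRing B] (φ : A →+* K) (hφ : Function.Injective φ) (s : A) (hs : IsUnit (φ s))
    (C : Subring K) (hC : ∀ z, z ∈ C ↔ ∃ a n, z * φ s ^ n = φ a)
    (ψ : A →+* B) (hψ : IsUnit (ψ s)) :
    ∃ ρ : C →+* B, ∀ a (ha : φ a ∈ C), ρ ⟨φ a, ha⟩ = ψ a := by
  have hφC (a : A) : φ a ∈ C := (hC _).2 ⟨a, 0, by simp⟩
  let := (φ.codRestrict C hφC).toAlgebra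
  have : IsLocalization.Away s C := by
    refine .mk s ?_ (fun z ↦ ?_) (fun a b hab ↦ ⟨0, by simpa using hφ (congrArg Subtype.val hab)⟩)
    · exact IsUnit.of_mul_eq_one ⟨↑hs.unit⁻¹, (hC _).2 ⟨1, 1, by simp⟩⟩
        (Subtype.ext (by simp [RingHom.algebraMap_toAlgebra]))
    · obtain ⟨a, n, h⟩ := (hC z).1 z.2
      exact ⟨n, a, Subtype.ext (by simpa [RingHom.algebraMap_toAlgebra] using h)⟩
  exact ⟨IsLocalization.Away.lift s hψ, fun a _ ↦ IsLocalization.Away.lift_eq s hψ a⟩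

/-- Let `C = V[u']_{P(u')} ⊆ V'` be a localization of a polynomial
`V`-subalgebra of a valuation-ring extension `V ⊆ V'` (the maximal ideal of `V'`, i.e.
`{z | v z < 1}`, contracts to the maximal ideal of `V`), where `u' ∈ V'` is transcendental
over `V` and `P(u')` is a unit in `V'`.  If `u ∈ V` satisfies `u ≡ u'` modulo the maximal
ideal of `V'`, then `P(u)` is a unit in `V` and the `V`-algebra map `C → V` sending `u'`
to `u` is a retraction of the inclusion `V ⊆ C`. -/
theorem stmt_6 (K' : Type*) [Field K'] (Γ₀ : Type*) [LinearOrderedCommGroupWithZero Γ₀]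
    (v : Valuation K' Γ₀) (V : Subring K') (hV : V ≤ v.integer)
    -- the extension is local: elements of V of value 1 are invertible in V
    (hloc : ∀ z ∈ V, v z = 1 → z⁻¹ ∈ V)
    (u' : K') (hu' : v u' ≤ 1)
    -- u' is transcendental over V
    (hutr : ∀ q : Polynomial K', (∀ n, q.coeff n ∈ V) → q ≠ 0 → q.eval u' ≠ 0)
    (P : Polynomial K') (hP : ∀ n, P.coeff n ∈ V)
    -- P(u') is a unit of V'
    (hPu' : v (P.eval u') = 1)
    (u : K') (hu : u ∈ V)
    -- u ≡ u' modulo the maximal ideal of V'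
    (huu' : v (u - u') < 1)
    -- C = V[u']_{P(u')}
    (C : Subring K')
    (hC : ∀ z : K', z ∈ C ↔ ∃ (g : Polynomial K') (n : ℕ),
      (∀ m, g.coeff m ∈ V) ∧ z * (P.eval u') ^ n = g.eval u') :
    (P.eval u ∈ V ∧ ∃ w ∈ V, P.eval u * w = 1) ∧
      ∃ ρ : C →+* K',
        (∀ z : C, ρ z ∈ V) ∧
        (∀ z : C, (z : K') ∈ V → ρ z = z) ∧
        (∀ z : C, (z : K') = u' → ρ z = u) := by
  have hPu : v (P.eval u) = 1 :=
    (v.map_eval_eq_of_sub_lt (fun n ↦ hV (hP n)) (hV hu) hu' (hPu' ▸ huu')).trans hPu'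
  obtain ⟨P₀, rfl⟩ := exists_map_subtype_eq_iff.2 hP
  let φ := eval₂RingHom V.subtype u'
  have hφ_eval (q : V[X]) : φ q = (q.map V.subtype).eval u' := (eval_map _ _).symm
  have hφC (z : K') : z ∈ C ↔ ∃ a n, z * φ P₀ ^ n = φ a := by
    simp only [hC, exists_and_left, exists_coeff_mem_and_iff, hφ_eval]
  have hφP : IsUnit (φ P₀) :=
    Ne.isUnit <| by rw [hφ_eval]; exact v.ne_zero_iff.1 (hPu'.trans_ne one_ne_zero)
  have hPu_eval : (P₀.map V.subtype).eval u = V.subtype (P₀.eval ⟨u, hu⟩) :=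
    eval_map_apply (p := P₀) V.subtype ⟨u, hu⟩
  rw [hPu_eval] at hPu ⊢
  have hψP : IsUnit (P₀.eval (⟨u, hu⟩ : V)) := by
    refine IsUnit.of_mul_eq_one ⟨_, hloc _ (Subtype.prop _) hPu⟩ (Subtype.ext ?_)
    exact mul_inv_cancel₀ fun h ↦ by simp [h] at hPu
  obtain ⟨ρ, hρ⟩ := C.exists_lift_away_of_mem_iff φ (injective_eval₂RingHom_subtype hutr) P₀ hφP
    hφC (evalRingHom _) hψP
  refine ⟨⟨Subtype.prop _, _, Subtype.prop _, congrArg Subtype.val hψP.mul_val_inv⟩,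
    V.subtype.comp ρ, fun z ↦ (ρ z).2, fun ⟨z, hzC⟩ hz ↦ ?_, fun ⟨z, hzC⟩ hz ↦ ?_⟩
  · simpa [φ] using congrArg Subtype.val (hρ (Polynomial.C ⟨z, hz⟩) (by simpa [φ] using hzC))
  · subst hz
    simpa [φ] using congrArg Subtype.val (hρ X (by simpa [φ] using hzC))
end

section
/- Let V ⊆ V' be a dense extension of valuation rings (same fraction-field valuation, V dense in V'). Then every pseudo-convergent sequence in V that has a pseudo-limit in V' and is not fundamental has a pseudo-limit in V. -/
/-!
Non-fundamental means the gaps `v (a i - a j)` all stay `≥ γ` for some `γ ≠ 0`. By density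
some `y ∈ V` satisfies `v (x - y) < γ`, and in an ultrametric setting any point that close to a
pseudo-limit is again a pseudo-limit.
-/

namespace Valuation

variable {R Γ₀ : Type*} [Ring R] [LinearOrderedCommGroupWithZero Γ₀] (v : Valuation R Γ₀)

theorem map_sub_eq_of_map_sub_lt {x y z : R} (h : v (x - y) < v (x - z)) :
    v (y - z) = v (x - z) := by
  rw [show y - z = (x - z) - (x - y) by abel, v.map_sub_eq_of_lt_left h]

def IsPseudoLimit {ι : Type*} [LinearOrder ι] (a : ι → R) (x : R) : Prop :=
  ∀ i j : ι, i < j → v (x - a i) = v (a i - a j)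

theorem IsPseudoLimit.of_map_sub_lt {ι : Type*} [LinearOrder ι] {a : ι → R} {x y : R}
    {γ : Γ₀} (hlim : v.IsPseudoLimit a x) (hgap : ∀ i j : ι, i < j → γ ≤ v (a i - a j))
    (hxy : v (x - y) < γ) : v.IsPseudoLimit a y := fun i j hij => by
  have hclose : v (x - y) < v (x - a i) := hlim i j hij ▸ hxy.trans_le (hgap i j hij)
  rw [v.map_sub_eq_of_map_sub_lt hclose, hlim i j hij]

end Valuation

theorem stmt_13_general (K' : Type*) [Field K'] (Γ₀ : Type*) [LinearOrderedCommGroupWithZero Γ₀]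
    (v : Valuation K' Γ₀) (V : Subring K')
    (hdense : ∀ x' ∈ v.integer, ∀ γ : Γ₀, γ ≠ 0 → ∃ a ∈ V, v (x' - a) < γ)
    (ι : Type*) [LinearOrder ι] (a : ι → K')
    (x : K') (hx : x ∈ v.integer)
    (hlim : ∀ i j : ι, i < j → v (x - a i) = v (a i - a j))
    (hnotfund : ¬ (∀ γ : Γ₀, γ ≠ 0 → ∃ i j : ι, i < j ∧ v (a i - a j) < γ)) :
    ∃ y ∈ V, ∀ i j : ι, i < j → v (y - a i) = v (a i - a j) := by
  push Not at hnotfund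
  obtain ⟨γ, hγ, hgap⟩ := hnotfund
  obtain ⟨y, hyV, hxy⟩ := hdense x hx γ hγ
  exact ⟨y, hyV, Valuation.IsPseudoLimit.of_map_sub_lt v hlim hgap hxy⟩

/-- Let `V ⊆ V'` be a dense extension of valuation rings.  Then every
pseudo-convergent sequence in `V` that has a pseudo-limit in `V'` and is not fundamental
has a pseudo-limit in `V`.  Here `V'` is the valuation ring of the valuation `v`, dense
means every element of `V'` is approximated by elements of `V` to within any value, and
a sequence is fundamental when the values `val(v_i − v_j)` (`i < j`) are cofinal in the
value group (multiplicatively: get below every nonzero `γ`). -/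
theorem stmt_13 (K' : Type*) [Field K'] (Γ₀ : Type*) [LinearOrderedCommGroupWithZero Γ₀]
    (v : Valuation K' Γ₀) (V : Subring K') (hV : V ≤ v.integer)
    (hdense : ∀ x' ∈ v.integer, ∀ γ : Γ₀, γ ≠ 0 → ∃ a ∈ V, v (x' - a) < γ)
    (ι : Type*) [LinearOrder ι] (a : ι → K') (ha : ∀ j, a j ∈ V)
    (hpc : ∀ i j k : ι, i < j → j < k → v (a j - a k) < v (a i - a k))
    (x : K') (hx : x ∈ v.integer)
    (hlim : ∀ i j : ι, i < j → v (x - a i) = v (a i - a j))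
    (hnotfund : ¬ (∀ γ : Γ₀, γ ≠ 0 → ∃ i j : ι, i < j ∧ v (a i - a j) < γ)) :
    ∃ y ∈ V, ∀ i j : ι, i < j → v (y - a i) = v (a i - a j) :=
  stmt_13_general K' Γ₀ v V hdense ι a x hx hlim hnotfund
end

section
/- Let V ⊆ V' be an immediate extension of valuation rings such that V' is a filtered union of subrings that are localizations of polynomial V-subalgebras in one variable, and let V be such that every such subring admits a V-algebra retraction to V. Then any finite system of polynomial equations over V with a solution in V' has a solution in V. -/
/-! A solution of a system over `V` in a `V`-algebra `C` is carried by any `V`-algebra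
retraction `C → V` to a solution in `V`; the hypotheses provide such a `C` containing any
given finite set of elements of `V'`. -/

open Polynomial

variable {K' : Type*} [Field K'] {Γ₀ : Type*} [LinearOrderedCommGroupWithZero Γ₀]

theorem IsLocPolynomialSub.le {v : Valuation K' Γ₀} {V C : Subring K'}
    (hC : IsLocPolynomialSub v V C) : V ≤ C := by
  obtain ⟨u', -, -, P, -, -, hmem⟩ := hC
  intro z hz
  rw [hmem]
  refine ⟨Polynomial.C z, 0, fun m => ?_, by simp⟩
  rw [Polynomial.coeff_C]
  split_ifs
  exacts [hz, V.zero_mem]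

theorem MvPolynomial.eval_retraction_eq_zero {A σ : Type*} [CommRing A] {V C : Subring A}
    (hVC : V ≤ C) (ρ : C →+* A) (hρ : ∀ z : C, (z : A) ∈ V → ρ z = z)
    {F : MvPolynomial σ A} (hF : ∀ d, F.coeff d ∈ V) {x : σ → C}
    (hx : eval (fun j => (x j : A)) F = 0) : eval (fun j => ρ (x j)) F = 0 := by
  obtain ⟨F₀, rfl⟩ : F ∈ Set.range (map C.subtype) := by
    refine mem_range_map_iff_coeffs_subset.2 fun c hc => ?_
    obtain ⟨d, -, rfl⟩ := mem_coeffs_iff.1 hc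
    exact ⟨⟨_, hVC (hF d)⟩, rfl⟩
  have hfix : map ρ F₀ = map C.subtype F₀ := by
    ext d
    rw [coeff_map, coeff_map]
    exact hρ _ (by simpa only [coeff_map, Subring.coe_subtype] using hF d)
  have hF₀ : eval x F₀ = 0 := by
    apply C.subtype_injective
    rw [map_zero, ← hx, eval₂_comp, eval_map]
    rfl
  change eval (ρ ∘ x) _ = 0
  rw [← hfix, eval_map, ← eval₂_comp, hF₀, map_zero]

theorem stmt_19_general (v : Valuation K' Γ₀) (V : Subring K')
    -- V' is a filtered union of localizations of polynomial V-subalgebras in one variable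
    (hunion : ∀ s : Finset K', (↑s : Set K') ⊆ (v.integer : Set K') →
      ∃ C : Subring K', (↑s : Set K') ⊆ (C : Set K') ∧ C ≤ v.integer ∧
        IsLocPolynomialSub v V C)
    -- every such subring admits a V-algebra retraction onto V
    (hret : ∀ C : Subring K', C ≤ v.integer → IsLocPolynomialSub v V C →
      ∃ ρ : C →+* K', (∀ z : C, ρ z ∈ V) ∧ (∀ z : C, (z : K') ∈ V → ρ z = z)) :
    ∀ (n m : ℕ) (F : Fin n → MvPolynomial (Fin m) K'),
      (∀ i d, (F i).coeff d ∈ V) →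
      (∃ sol : Fin m → K', (∀ j, sol j ∈ v.integer) ∧
        ∀ i, MvPolynomial.eval sol (F i) = 0) →
      ∃ ysol : Fin m → K', (∀ j, ysol j ∈ V) ∧ ∀ i, MvPolynomial.eval ysol (F i) = 0 := by
  classical
  rintro n m F hF ⟨sol, hsol_int, hsol⟩
  obtain ⟨C, hsolC, hC_int, hC⟩ := hunion (Finset.univ.image sol) (by
    simpa [Set.range_subset_iff] using hsol_int)
  obtain ⟨ρ, hρV, hρ⟩ := hret C hC_int hC
  let x : Fin m → C := fun j => ⟨sol j, hsolC (by simp)⟩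
  exact ⟨fun j => ρ (x j), fun j => hρV _, fun i =>
    MvPolynomial.eval_retraction_eq_zero hC.le ρ hρ (hF i) (hsol i)⟩

/-- Let `V ⊆ V'` be an immediate extension of valuation rings such that
`V'` is a filtered union of subrings that are localizations of polynomial `V`-subalgebras
in one variable, and suppose every such subring admits a `V`-algebra retraction to `V`.
Then any finite system of polynomial equations over `V` with a solution in `V'` has a
solution in `V`. -/
theorem stmt_19 (v : Valuation K' Γ₀) (V : Subring K') (hV : V ≤ v.integer)
    -- immediate extension: same value group and same residue field
    (hvalgrp : ∀ z : K', z ≠ 0 → ∃ a : K', a ∈ V ∧ a ≠ 0 ∧ v a = v z)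
    (hres : ∀ z ∈ v.integer, ∃ a ∈ V, v (z - a) < 1)
    -- V' is a filtered union of localizations of polynomial V-subalgebras in one variable
    (hunion : ∀ s : Finset K', (↑s : Set K') ⊆ (v.integer : Set K') →
      ∃ C : Subring K', (↑s : Set K') ⊆ (C : Set K') ∧ C ≤ v.integer ∧
        IsLocPolynomialSub v V C)
    -- every such subring admits a V-algebra retraction onto V
    (hret : ∀ C : Subring K', C ≤ v.integer → IsLocPolynomialSub v V C →
      ∃ ρ : C →+* K', (∀ z : C, ρ z ∈ V) ∧ (∀ z : C, (z : K') ∈ V → ρ z = z)) :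
    ∀ (n m : ℕ) (F : Fin n → MvPolynomial (Fin m) K'),
      (∀ i d, (F i).coeff d ∈ V) →
      (∃ sol : Fin m → K', (∀ j, sol j ∈ v.integer) ∧
        ∀ i, MvPolynomial.eval sol (F i) = 0) →
      ∃ ysol : Fin m → K', (∀ j, ysol j ∈ V) ∧ ∀ i, MvPolynomial.eval ysol (F i) = 0 :=
  stmt_19_general v V hunion hret
end
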